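/- The monoid IC_n is generated by its quasi-idempotents: every element of IC_n is a finite product of elements α ∈ IC_n satisfying α⁴ = α². -/

import Mathlib

/-!
Induction on the total displacement `∑ x, (x - xα)` of `α ∈ IC_n`. If `α` fixes every point
of its domain it is idempotent. Otherwise let `a` be the largest moved point and `b = aα < a`.
Maximality of `a` and isotonicity keep `b + 1` out of `im α`, so redirecting `a` to `b + 1`
gives `β ∈ IC_n` of smaller displacement with `α = βσ`, where `σ` sends `b + 1` to `b`,
is undefined at `b` and fixes everything else. Since `σ²` is a partial identity, `σ` is a
quasi-idempotent of `IC_n`.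
-/

open scoped Classical

namespace ICCatalan

/-- Partial injective transformations on `Fin n` (representing the chain `[n] = {1,…,n}`). -/
abbrev PT (n : ℕ) := Fin n ≃. Fin n

/-- Composition (left-to-right, `x(αβ) = (xα)β`) makes `PT n` a monoid. -/
noncomputable instance instMonoidPT (n : ℕ) : Monoid (PT n) where
  mul f g := f.trans g
  one := PEquiv.refl (Fin n)
  mul_assoc := PEquiv.trans_assoc
  one_mul := PEquiv.refl_trans
  mul_one := PEquiv.trans_refl

lemma mul_def {n : ℕ} (f g : PT n) : f * g = f.trans g := rfl

/-- The domain of a partial transformation. -/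
def pdom {n : ℕ} (f : PT n) : Set (Fin n) := {x | ∃ y, f x = some y}

/-- The image of a partial transformation. -/
def pim {n : ℕ} (f : PT n) : Set (Fin n) := {y | ∃ x, f x = some y}

/-- The height `|im f|` of a partial transformation. -/
noncomputable def height {n : ℕ} (f : PT n) : ℕ := (pim f).ncard

/-- `f` is order-decreasing: `xf ≤ x` on the domain. -/
def IsDecr {n : ℕ} (f : PT n) : Prop := ∀ x y : Fin n, f x = some y → y ≤ x

/-- `f` is isotone: `x ≤ y` implies `xf ≤ yf` on the domain. -/
def IsIso {n : ℕ} (f : PT n) : Prop :=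
  ∀ x₁ x₂ y₁ y₂ : Fin n, f x₁ = some y₁ → f x₂ = some y₂ → x₁ ≤ x₂ → y₁ ≤ y₂

/-- The injective partial Catalan monoid `IC_n`: all isotone order-decreasing
partial injective transformations of `[n]`. -/
def IC (n : ℕ) : Set (PT n) := {f | IsIso f ∧ IsDecr f}

/-- `Q'_n = {α ∈ IC_n : 1 ∉ dom α}` (the least element of `Fin n` plays the role of `1 ∈ [n]`). -/
def Qp (n : ℕ) : Set (PT n) := {f | f ∈ IC n ∧ ∀ x : Fin n, (x : ℕ) = 0 → f x = none}

/-- `S¹ : S` with an identity adjoined (realized inside `PT n`). -/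
def SOne {n : ℕ} (S : Set (PT n)) : Set (PT n) := S ∪ {1}

/-- The starred Green relation `L*` of the subsemigroup `S`. -/
def LStar {n : ℕ} (S : Set (PT n)) (a b : PT n) : Prop :=
  ∀ x ∈ SOne S, ∀ y ∈ SOne S, (a * x = a * y ↔ b * x = b * y)

/-- The starred Green relation `R*` of the subsemigroup `S`. -/
def RStar {n : ℕ} (S : Set (PT n)) (a b : PT n) : Prop :=
  ∀ x ∈ SOne S, ∀ y ∈ SOne S, (x * a = y * a ↔ x * b = y * b)

/-- The starred Green relation `H* = L* ∩ R*`. -/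
def HStar {n : ℕ} (S : Set (PT n)) (a b : PT n) : Prop :=
  LStar S a b ∧ RStar S a b

/-- The partial identity on a subset `A` of `[n]`. -/
noncomputable def pid {n : ℕ} (A : Set (Fin n)) : PT n := PEquiv.ofSet A

/-- An essential element: exactly one point `y` of the domain is moved, and `yf = y - 1`. -/
def IsEssential {n : ℕ} (f : PT n) : Prop :=
  ∃ y z : Fin n, f y = some z ∧ (z : ℕ) + 1 = (y : ℕ) ∧
    ∀ x w : Fin n, f x = some w → w ≠ x → x = y

/-- The shift of `f`: the number of non-fixed points of its domain. -/
noncomputable def shift {n : ℕ} (f : PT n) : ℕ := {x : Fin n | ∃ w, f x = some w ∧ w ≠ x}.ncard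

lemma pow_four_eq_pow_two_of_isIdempotentElem_sq {M : Type*} [Monoid M] {a : M}
    (h : IsIdempotentElem (a ^ 2)) : a ^ 4 = a ^ 2 := by
  rw [show 4 = 2 * 2 from rfl, pow_mul]
  exact h.pow_succ_eq 1

section

variable {n : ℕ}

lemma mul_apply (f g : PT n) (x : Fin n) : (f * g) x = (f x).bind g := rfl

lemma isIdempotentElem_of_forall_eq {f : PT n} (h : ∀ x y, f x = some y → y = x) :
    IsIdempotentElem f := by
  refine PEquiv.ext fun x => ?_
  rw [mul_apply]
  cases hx : f x with
  | none => rfl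
  | some y =>
    obtain rfl := h x y hx
    exact hx

def quasiIdempotentsIC (n : ℕ) : Set (PT n) := {β | β ∈ IC n ∧ β ^ 4 = β ^ 2}

def displacement (f : PT n) : ℕ := ∑ x : Fin n, ((x : ℕ) - ((f x).getD x : ℕ))

def stepDown (b c : Fin n) : PT n where
  toFun x := if x = b then none else if x = c then some b else some x
  invFun y := if y = c then none else if y = b then some c else some y
  inv x y := by split_ifs <;> simp_all [eq_comm]

lemma stepDown_apply (b c x : Fin n) :
    stepDown b c x = if x = b then none else if x = c then some b else some x := rfl

lemma stepDown_eq_some {b c x y : Fin n} (h : stepDown b c x = some y) :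
    (y = x ∧ x ≠ b ∧ x ≠ c) ∨ (x = c ∧ y = b) := by
  rw [stepDown_apply] at h
  split_ifs at h <;> simp_all

lemma stepDown_pow_four_eq_pow_two (b c : Fin n) : stepDown b c ^ 4 = stepDown b c ^ 2 := by
  refine pow_four_eq_pow_two_of_isIdempotentElem_sq (isIdempotentElem_of_forall_eq ?_)
  intro x z hxz
  rw [sq, mul_apply] at hxz
  obtain ⟨y, hxy, hyz⟩ := Option.bind_eq_some_iff.mp hxz
  rcases stepDown_eq_some hxy with ⟨rfl, -, hxc⟩ | ⟨rfl, rfl⟩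
  · rcases stepDown_eq_some hyz with ⟨rfl, -⟩ | ⟨rfl, -⟩
    · rfl
    · exact absurd rfl hxc
  · simp [stepDown_apply] at hyz

lemma stepDown_mem_IC {b c : Fin n} (h : (b : ℕ) + 1 = c) : stepDown b c ∈ IC n := by
  refine ⟨fun x₁ x₂ y₁ y₂ h₁ h₂ hle => ?_, fun x y hxy => ?_⟩
  · rw [Fin.le_def] at hle ⊢
    rcases stepDown_eq_some h₁ with ⟨rfl, hb₁, hc₁⟩ | ⟨rfl, rfl⟩ <;>
      rcases stepDown_eq_some h₂ with ⟨rfl, hb₂, hc₂⟩ | ⟨rfl, rfl⟩ <;>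
      (try simp only [ne_eq, Fin.ext_iff] at *) <;> omega
  · rw [Fin.le_def]
    rcases stepDown_eq_some hxy with ⟨rfl, -, -⟩ | ⟨rfl, rfl⟩ <;> omega

section Factorization

variable {α β : PT n} {a b c : Fin n}

lemma apply_ne_some_succ (hα : α ∈ IC n) (hab : α a = some b) (hba : b ≠ a)
    (hmax : ∀ x y, α x = some y → y ≠ x → x ≤ a) (hbc : (b : ℕ) + 1 = c) (x : Fin n) :
    α x ≠ some c := by
  intro hxc
  rcases le_or_gt x a with hxa | hax
  · have := Fin.le_def.mp (hα.1 x a c b hxc hab hxa)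
    omega
  · have hca : c ≤ a := Fin.le_def.mpr (by have := Fin.le_def.mp (hα.2 a b hab); omega)
    exact absurd (hmax x c hxc (ne_of_lt (hca.trans_lt hax))) (not_le.mpr hax)

lemma trans_swap_apply {ι κ : Type*} [DecidableEq ι] [DecidableEq κ] {f : ι ≃. κ} {i : ι}
    {j k : κ} (hij : f i = some j) (hk : ∀ x, f x ≠ some k) (x : ι) :
    f.trans (Equiv.swap j k).toPEquiv x = if x = i then some k else f x := by
  split_ifs with hxi
  · subst hxi
    simp [PEquiv.trans, hij]
  · cases hx : f x with
    | none => simp [PEquiv.trans, hx]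
    | some y =>
      have hyj : y ≠ j := fun h => hxi (f.inj (h ▸ hx) hij)
      have hyk : y ≠ k := fun h => hk x (h ▸ hx)
      simp [PEquiv.trans, hx, Equiv.swap_apply_of_ne_of_ne hyj hyk]

lemma mem_IC_of_eq_update (hα : α ∈ IC n) (hab : α a = some b) (hbc : (b : ℕ) + 1 = c)
    (hca : c ≤ a) (hβ : ∀ x, β x = if x = a then some c else α x) : β ∈ IC n := by
  have hβ_eq_some : ∀ {x y}, β x = some y → (x = a ∧ y = c) ∨ (x ≠ a ∧ α x = some y) := by
    intro x y hxy
    rw [hβ] at hxy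
    split_ifs at hxy with hxa
    · exact Or.inl ⟨hxa, (Option.some_injective _ hxy).symm⟩
    · exact Or.inr ⟨hxa, hxy⟩
  refine ⟨fun x₁ x₂ y₁ y₂ h₁ h₂ hle => ?_, fun x y hxy => ?_⟩
  · rcases hβ_eq_some h₁ with ⟨rfl, rfl⟩ | ⟨-, h₁⟩ <;>
      rcases hβ_eq_some h₂ with ⟨rfl, rfl⟩ | ⟨hx₂, h₂⟩
    · exact le_rfl
    · -- `x₂α ≥ aα = b`, and `x₂α ≠ b` by injectivity
      have hy₂ : y₂ ≠ b := fun h => hx₂ (α.inj (h ▸ h₂) hab)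
      have := Fin.le_def.mp (hα.1 _ _ _ _ hab h₂ hle)
      exact Fin.le_def.mpr (by have := Fin.val_ne_of_ne hy₂; omega)
    · have := Fin.le_def.mp (hα.1 _ _ _ _ h₁ hab hle)
      exact Fin.le_def.mpr (by omega)
    · exact hα.1 _ _ _ _ h₁ h₂ hle
  · rcases hβ_eq_some hxy with ⟨rfl, rfl⟩ | ⟨-, hxy⟩
    · exact hca
    · exact hα.2 x y hxy

lemma displacement_lt_of_eq_update (hab : α a = some b) (hbc : b < c) (hca : c ≤ a)
    (hβ : ∀ x, β x = if x = a then some c else α x) : displacement β < displacement α := by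
  refine Finset.sum_lt_sum (fun x _ => ?_) ⟨a, Finset.mem_univ a, ?_⟩
  · rw [hβ]
    split_ifs with hxa
    · subst hxa
      rw [hab, Option.getD_some, Option.getD_some]
      omega
    · exact le_rfl
  · rw [hβ, if_pos rfl, hab, Option.getD_some, Option.getD_some]
    omega

lemma eq_mul_stepDown_of_eq_update (hab : α a = some b) (hbc : b ≠ c)
    (hc : ∀ x, α x ≠ some c) (hβ : ∀ x, β x = if x = a then some c else α x) :
    α = β * stepDown b c := by
  refine PEquiv.ext fun x => ?_
  rw [mul_apply, hβ]
  split_ifs with hxa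
  · simp [hxa, hab, stepDown_apply, hbc.symm]
  · cases hx : α x with
    | none => rfl
    | some y =>
      have hyb : y ≠ b := fun h => hxa (α.inj (h ▸ hx) hab)
      have hyc : y ≠ c := fun h => hc x (h ▸ hx)
      simp [stepDown_apply, hyb, hyc]

end Factorization

lemma exists_eq_mul_of_not_forall_eq {α : PT n} (hα : α ∈ IC n)
    (hmove : ¬ ∀ x y, α x = some y → y = x) :
    ∃ β ∈ IC n, ∃ σ ∈ quasiIdempotentsIC n, displacement β < displacement α ∧ α = β * σ := by
  set moved := Finset.univ.filter fun x => ∃ y, α x = some y ∧ y ≠ x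
  have hne : moved.Nonempty := by
    push Not at hmove
    obtain ⟨x, y, hxy, hne⟩ := hmove
    exact ⟨x, Finset.mem_filter.mpr ⟨Finset.mem_univ x, y, hxy, hne⟩⟩
  obtain ⟨a, ha, hmax⟩ := moved.exists_max_image id hne
  obtain ⟨b, hab, hba⟩ := (Finset.mem_filter.mp ha).2
  have hmax' : ∀ x y, α x = some y → y ≠ x → x ≤ a := fun x y hxy hne =>
    hmax x (Finset.mem_filter.mpr ⟨Finset.mem_univ x, y, hxy, hne⟩)
  have hblt : (b : ℕ) < a := Fin.lt_def.mp (lt_of_le_of_ne (hα.2 a b hab) hba)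
  set c : Fin n := ⟨b + 1, by omega⟩
  have hbc : (b : ℕ) + 1 = c := rfl
  have hca : c ≤ a := Fin.le_def.mpr hblt
  have hb_lt_c : b < c := Fin.lt_def.mpr (by omega)
  have hc := apply_ne_some_succ hα hab hba hmax' hbc
  have hβ := trans_swap_apply hab hc
  exact ⟨_, mem_IC_of_eq_update hα hab hbc hca hβ, stepDown b c,
    ⟨stepDown_mem_IC hbc, stepDown_pow_four_eq_pow_two b c⟩,
    displacement_lt_of_eq_update hab hb_lt_c hca hβ,
    eq_mul_stepDown_of_eq_update hab hb_lt_c.ne hc hβ⟩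

theorem mem_closure_quasiIdempotentsIC {α : PT n} (hα : α ∈ IC n) :
    α ∈ Subsemigroup.closure (quasiIdempotentsIC n) := by
  by_cases hfix : ∀ x y, α x = some y → y = x
  · refine Subsemigroup.subset_closure ⟨hα, ?_⟩
    have hidem := isIdempotentElem_of_forall_eq hfix
    exact pow_four_eq_pow_two_of_isIdempotentElem_sq (hidem.pow 2)
  · obtain ⟨β, hβ, σ, hσ, hlt, hfac⟩ := exists_eq_mul_of_not_forall_eq hα hfix
    rw [hfac]
    exact Subsemigroup.mul_mem _ (mem_closure_quasiIdempotentsIC hβ)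
      (Subsemigroup.subset_closure hσ)
termination_by displacement α

end

theorem stmt10_general (n : ℕ) :
    ∀ α ∈ IC n,
      α ∈ Subsemigroup.closure {β : PT n | β ∈ IC n ∧ β ^ 4 = β ^ 2} :=
  fun _ => mem_closure_quasiIdempotentsIC

/-- `IC_n` is generated by its quasi-idempotents: every element of `IC_n`
is a finite product of elements `α ∈ IC_n` satisfying `α⁴ = α²`. -/
theorem stmt10 (n : ℕ) (hn : 0 < n) :
    ∀ α ∈ IC n,
      α ∈ Subsemigroup.closure {β : PT n | β ∈ IC n ∧ β ^ 4 = β ^ 2} :=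
  stmt10_general n

end ICCatalan
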